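/- For all simple graphs G and H and every d ≥ 1, there exists a graph homomorphism (G * H) ⋉ d → (G ⋉ d) * H. -/

import Mathlib

open SimpleGraph

universe u v

/-- The join `G + H` of two simple graphs. -/
def graphJoin {α : Type u} {β : Type v} (G : SimpleGraph α) (H : SimpleGraph β) :
    SimpleGraph (α ⊕ β) where
  Adj x y :=
    match x, y with
    | Sum.inl a, Sum.inl a' => G.Adj a a'
    | Sum.inr b, Sum.inr b' => H.Adj b b'
    | Sum.inl _, Sum.inr _ => True
    | Sum.inr _, Sum.inl _ => True
  symm := by
    constructor
    rintro (a | b) (a' | b') h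
    · exact G.adj_symm h
    · trivial
    · trivial
    · exact H.adj_symm h
  loopless := by
    constructor
    rintro (a | b) h
    · exact G.irrefl h
    · exact H.irrefl h

/-- The disjunctive product `G * H`. -/
def disjProd {α : Type u} {β : Type v} (G : SimpleGraph α) (H : SimpleGraph β) :
    SimpleGraph (α × β) where
  Adj p q := G.Adj p.1 q.1 ∨ H.Adj p.2 q.2
  symm := ⟨fun p q h => h.imp (fun h' => G.adj_symm h') (fun h' => H.adj_symm h')⟩
  loopless := ⟨fun p h => h.elim (fun h' => G.irrefl h') (fun h' => H.irrefl h')⟩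

/-- The lexicographic product `G ⋉ H`. -/
def lexProd {α : Type u} {β : Type v} (G : SimpleGraph α) (H : SimpleGraph β) :
    SimpleGraph (α × β) where
  Adj p q := G.Adj p.1 q.1 ∨ (p.1 = q.1 ∧ H.Adj p.2 q.2)
  symm := ⟨fun p q h => h.imp (fun h' => G.adj_symm h') (fun h' => ⟨h'.1.symm, H.adj_symm h'.2⟩)⟩
  loopless := ⟨fun p h => h.elim (fun h' => G.irrefl h') (fun h' => H.irrefl h'.2)⟩

/-- The `d`-fold blowup `G ⋉ d`, i.e. the lexicographic product `G ⋉ K_d`. -/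
def blowup {α : Type u} (G : SimpleGraph α) (d : ℕ) : SimpleGraph (α × Fin d) :=
  lexProd G (⊤ : SimpleGraph (Fin d))

/-- The `d`-fractionalization `G/d`: the graph of `d`-cliques of `G`, with two
`d`-cliques adjacent iff they are disjoint and pairwise adjacent. -/
def fracGraph {α : Type u} (G : SimpleGraph α) (d : ℕ) :
    SimpleGraph {S : Finset α // S.card = d ∧ G.IsClique (S : Set α)} where
  Adj S T := S ≠ T ∧ Disjoint S.val T.val ∧ ∀ a ∈ S.val, ∀ b ∈ T.val, G.Adj a b
  symm := by
    constructor
    rintro S T ⟨hne, hd, hadj⟩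
    exact ⟨hne.symm, hd.symm, fun b hb a ha => (hadj a ha b hb).symm⟩
  loopless := ⟨fun S h => h.1 rfl⟩

/-- The `n`-fold disjunctive power `G^{*n}`. -/
def disjPow {α : Type u} (G : SimpleGraph α) (n : ℕ) :
    SimpleGraph (Fin n → α) where
  Adj f g := ∃ i, G.Adj (f i) (g i)
  symm := ⟨fun f g ⟨i, h⟩ => ⟨i, G.adj_symm h⟩⟩
  loopless := ⟨fun f ⟨i, h⟩ => G.irrefl h⟩

/-- A semiring family of graphs. -/
structure SemiringFamily where
  V : ℕ → Type u
  F : ∀ n, SimpleGraph (V n)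
  isEmpty_zero : IsEmpty (V 0)
  nonempty_one : Nonempty (V 1)
  add_hom : ∀ n m : ℕ, Nonempty (graphJoin (F n) (F m) →g F (n + m))
  mul_hom : ∀ n m : ℕ, Nonempty (disjProd (F n) (F m) →g F (n * m))

/-- The `F`-number: the least `n` such that `G → F_n`. -/
noncomputable def etaF (F : SemiringFamily.{u}) {α : Type v} (G : SimpleGraph α) : ℕ :=
  sInf {n : ℕ | Nonempty (G →g F.F n)}

/-- The fractional `F`-number. -/
noncomputable def etaFrac (F : SemiringFamily.{u}) {α : Type v} (G : SimpleGraph α) : ℝ :=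
  sInf {x : ℝ | ∃ n d : ℕ, 1 ≤ d ∧ Nonempty (G →g fracGraph (F.F n) d) ∧ x = (n : ℝ) / d}

/-- The asymptotic `F`-number. -/
noncomputable def etaAsymp (F : SemiringFamily.{u}) {α : Type v} (G : SimpleGraph α) : ℝ :=
  sInf {x : ℝ | ∃ n : ℕ, 1 ≤ n ∧ x = (etaF F (disjPow G n) : ℝ) ^ ((1 : ℝ) / n)}

/-- The orthogonal complement of a set of vertices. -/
def perp {α : Type u} (G : SimpleGraph α) (S : Set α) : Set α :=
  {v | ∀ s ∈ S, G.Adj v s}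

/-- A flat is a set of vertices with `S^{⊥⊥} = S`. -/
def IsFlat {α : Type u} (G : SimpleGraph α) (S : Set α) : Prop :=
  perp G (perp G S) = S

/-- Homomorphic equivalence of two graphs. -/
def HomEquiv {α : Type u} {β : Type v} (G : SimpleGraph α) (H : SimpleGraph β) : Prop :=
  Nonempty (G →g H) ∧ Nonempty (H →g G)

/-- A linear-like semiring family: every flat of `F_n` induces a subgraph with some
clique number `k`, homomorphically equivalent to `F_k`. -/
structure LinearLikeFamily extends SemiringFamily where
  linearLike : ∀ n (S : Set (V n)), IsFlat (F n) S →
    ∃ k : ℕ, (∃ s : Finset S, ((F n).induce S).IsNClique k s) ∧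
      (∀ s : Finset S, ¬ ((F n).induce S).IsNClique (k + 1) s) ∧
      HomEquiv ((F n).induce S) (F k)

def lexProdDisjProdHom {α : Type u} {β : Type v} {γ : Type*}
    (G : SimpleGraph α) (H : SimpleGraph β) (K : SimpleGraph γ) :
    lexProd (disjProd G H) K →g disjProd (lexProd G K) H where
  toFun p := ((p.1.1, p.2), p.1.2)
  map_rel' := by
    rintro ⟨⟨a, b⟩, k⟩ ⟨⟨a', b'⟩, k'⟩ ((hG | hH) | ⟨heq, hK⟩)
    · exact .inl (.inl hG)
    · exact .inr hH
    · exact .inl (.inr ⟨(Prod.mk.inj heq).1, hK⟩)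

theorem blowup_disjProd_hom_general {α : Type u} {β : Type v}
    (G : SimpleGraph α) (H : SimpleGraph β) (d : ℕ) :
    Nonempty (blowup (disjProd G H) d →g disjProd (blowup G d) H) :=
  ⟨lexProdDisjProdHom G H ⊤⟩

/-- There is a graph homomorphism `(G * H) ⋉ d → (G ⋉ d) * H`. -/
theorem blowup_disjProd_hom {α : Type u} {β : Type v}
    (G : SimpleGraph α) (H : SimpleGraph β) (d : ℕ) (hd : 1 ≤ d) :
    Nonempty (blowup (disjProd G H) d →g disjProd (blowup G d) H) :=
  blowup_disjProd_hom_general G H d
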